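/- arXiv:2007.09491 — 4 statements merged into one kernel-verified Lean document; each statement's English description precedes it below -/
import Mathlib

section
/- η(t) = t²·u²(t) − v(t) tends to +∞ as t → ∞, where u(t) = (t-1)/(t·log t) and v(t) = ∫₀ᵗ τ·u²(τ) dτ. -/
open Real MeasureTheory Filter Set

/-- u(t) = (t-1)/(t·log t) with the removable singularity u(1) = 1. -/
noncomputable def u (t : ℝ) : ℝ := if t = 1 then 1 else (t - 1) / (t * Real.log t)

/-- v(t) = ∫₀ᵗ τ·u(τ)² dτ. -/
noncomputable def v (t : ℝ) : ℝ := ∫ τ in Set.Ioo (0:ℝ) t, τ * u τ ^ 2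

/-!
For `t > 1` the main term is `t²u(t)² = (t - 1)²/log²t`. Split `v(t)` at `1` and `a = t^(4/5)`:
on `[1, a]` we have `u ≤ 1`, so that piece is at most `a²/2`; on `[a, t]` we have
`u(τ) ≤ 1/log τ ≤ 5/(4 log t)`, so that piece is at most `(25/32) t²/log²t`. As `25/32 < 1`, the
main term wins by a multiple of `t²/log²t`, which eventually exceeds `a² = t^(8/5)`; hence
`η(t) ≥ a²/2 - v(1)`. That `v` is finite at all comes from `τu(τ)² ≤ 1/(τ log²τ)` near `0`,
which has the antiderivative `-1/log τ`.
-/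

lemma u_of_ne_one {t : ℝ} (h : t ≠ 1) : u t = (t - 1) / (t * log t) := if_neg h

lemma u_nonneg {t : ℝ} (ht : 0 < t) : 0 ≤ u t := by
  rcases lt_trichotomy t 1 with h | rfl | h
  · rw [u_of_ne_one h.ne]
    exact div_nonneg_of_nonpos (by linarith)
      (mul_nonpos_of_nonneg_of_nonpos ht.le (log_nonpos ht.le h.le))
  · simp [u]
  · rw [u_of_ne_one h.ne']
    exact div_nonneg (by linarith) (mul_pos ht (log_pos h)).le

lemma u_le_one {t : ℝ} (ht : 1 ≤ t) : u t ≤ 1 := by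
  rcases ht.eq_or_lt with rfl | h
  · simp [u]
  have ht0 : 0 < t := by linarith
  rw [u_of_ne_one h.ne', div_le_one (mul_pos ht0 (log_pos h))]
  have := one_sub_inv_le_log_of_pos ht0
  calc t - 1 = t * (1 - t⁻¹) := by field_simp
    _ ≤ t * log t := by gcongr

lemma u_le_inv_log {t : ℝ} (ht : 1 < t) : u t ≤ (log t)⁻¹ := by
  have ht0 : 0 < t := by linarith
  rw [u_of_ne_one ht.ne', div_le_iff₀ (mul_pos ht0 (log_pos ht))]
  field_simp [(log_pos ht).ne']
  linarith

lemma u_le_inv {t : ℝ} (ht0 : 0 < t) (ht1 : t ≤ 1) : u t ≤ t⁻¹ := by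
  rcases ht1.eq_or_lt with rfl | h
  · simp [u]
  have hlog : log t < 0 := log_neg ht0 h
  rw [u_of_ne_one h.ne, div_le_iff_of_neg (mul_neg_of_pos_of_neg ht0 hlog)]
  field_simp
  linarith [log_le_sub_one_of_pos ht0]

lemma u_sq_le_four {t : ℝ} (ht : 1 / 2 ≤ t) : u t ^ 2 ≤ 4 := by
  have ht0 : 0 < t := by linarith
  have hu : u t ≤ 2 := by
    rcases le_total t 1 with h | h
    · exact (u_le_inv ht0 h).trans (by rw [inv_le_comm₀ ht0 two_pos]; linarith)
    · linarith [u_le_one h]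
  nlinarith [u_nonneg ht0]

lemma sq_mul_u_sq {t : ℝ} (h0 : t ≠ 0) (h1 : t ≠ 1) :
    t ^ 2 * u t ^ 2 = (t - 1) ^ 2 / log t ^ 2 := by
  rw [u_of_ne_one h1]
  field_simp

lemma measurable_u : Measurable u :=
  Measurable.ite (measurableSet_singleton 1) measurable_const
    ((measurable_id.sub measurable_const).div (measurable_id.mul measurable_log))

/-- `-(log x)⁻¹` is an antiderivative of the integrand, continuous at `0` since `log 0 = 0`. -/
lemma intervalIntegrable_inv_mul_log_sq {c : ℝ} (hc0 : 0 < c) (hc1 : c < 1) :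
    IntervalIntegrable (fun x => (x * log x ^ 2)⁻¹) volume 0 c := by
  have hlog : ∀ x ∈ Ioc 0 c, log x ≠ 0 := fun x hx => (log_neg hx.1 (by linarith [hx.2])).ne
  rw [intervalIntegrable_iff_integrableOn_Ioc_of_le hc0.le]
  refine intervalIntegral.integrableOn_deriv_of_nonneg (g := fun x => -(log x)⁻¹)
    ?_ (fun x hx => ?_) (fun x hx => inv_nonneg.mpr (mul_nonneg hx.1.le (sq_nonneg _)))
  · intro x hx
    rcases hx.1.eq_or_lt with rfl | hx0
    · rw [continuousWithinAt_Icc_iff_Ici hc0, ← continuousWithinAt_Ioi_iff_Ici,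
        ContinuousWithinAt, log_zero, inv_zero, neg_zero]
      exact ((tendsto_inv_atBot_zero.comp tendsto_log_nhdsGT_zero).neg).trans (by rw [neg_zero])
    · exact ((continuousAt_log hx0.ne').inv₀ (hlog x ⟨hx0, hx.2⟩)).neg.continuousWithinAt
  · exact ((hasDerivAt_log hx.1.ne').inv (hlog x (Ioo_subset_Ioc_self hx))).neg.congr_deriv
      (by field_simp)

lemma intervalIntegrable_mul_u_sq_zero_half :
    IntervalIntegrable (fun τ => τ * u τ ^ 2) volume 0 (1 / 2) := by
  refine (intervalIntegrable_inv_mul_log_sq (by norm_num) (by norm_num)).mono_fun'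
    (measurable_id.mul (measurable_u.pow_const 2)).aestronglyMeasurable ?_
  rw [uIoc_of_le (by norm_num), EventuallyLE, ae_restrict_iff' measurableSet_Ioc]
  refine ae_of_all _ fun τ ⟨h0, h1⟩ => ?_
  have hlog : log τ ≠ 0 := (log_neg h0 (by linarith)).ne
  rw [norm_of_nonneg (by positivity), u_of_ne_one (by linarith)]
  calc τ * ((τ - 1) / (τ * log τ)) ^ 2 = (τ - 1) ^ 2 * (τ * log τ ^ 2)⁻¹ := by field_simp
    _ ≤ (τ * log τ ^ 2)⁻¹ := mul_le_of_le_one_left (by positivity) (by nlinarith)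

lemma intervalIntegrable_mul_u_sq_of_u_sq_le {a b c : ℝ} (ha : 0 ≤ a) (hab : a ≤ b)
    (hc : ∀ τ ∈ Icc a b, u τ ^ 2 ≤ c) :
    IntervalIntegrable (fun τ => τ * u τ ^ 2) volume a b := by
  refine ((continuous_mul_const c).intervalIntegrable a b).mono_fun'
    (measurable_id.mul (measurable_u.pow_const 2)).aestronglyMeasurable ?_
  rw [uIoc_of_le hab, EventuallyLE, ae_restrict_iff' measurableSet_Ioc]
  refine ae_of_all _ fun τ hτ => ?_
  have hτ0 : 0 ≤ τ := ha.trans hτ.1.le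
  rw [norm_of_nonneg (by positivity)]
  exact mul_le_mul_of_nonneg_left (hc τ (Ioc_subset_Icc_self hτ)) hτ0

lemma integral_mul_u_sq_le_of_u_sq_le {a b c : ℝ} (ha : 0 ≤ a) (hab : a ≤ b)
    (hc : ∀ τ ∈ Icc a b, u τ ^ 2 ≤ c) :
    ∫ τ in a..b, τ * u τ ^ 2 ≤ (b ^ 2 - a ^ 2) / 2 * c :=
  calc ∫ τ in a..b, τ * u τ ^ 2 ≤ ∫ τ in a..b, τ * c :=
        intervalIntegral.integral_mono_on hab (intervalIntegrable_mul_u_sq_of_u_sq_le ha hab hc)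
          ((continuous_mul_const c).intervalIntegrable a b)
          fun τ hτ => mul_le_mul_of_nonneg_left (hc τ hτ) (ha.trans hτ.1)
    _ = (b ^ 2 - a ^ 2) / 2 * c := by rw [intervalIntegral.integral_mul_const, integral_id]

lemma intervalIntegrable_mul_u_sq {a b : ℝ} (ha : 0 ≤ a) (hb : 0 ≤ b) :
    IntervalIntegrable (fun τ => τ * u τ ^ 2) volume a b := by
  have hzero : ∀ t, 0 ≤ t → IntervalIntegrable (fun τ => τ * u τ ^ 2) volume 0 t := by
    intro t ht
    rcases le_total t (1 / 2) with h | h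
    · exact intervalIntegrable_mul_u_sq_zero_half.mono_set
        (uIcc_subset_uIcc_left (Icc_subset_uIcc ⟨ht, h⟩))
    · exact intervalIntegrable_mul_u_sq_zero_half.trans
        (intervalIntegrable_mul_u_sq_of_u_sq_le (by norm_num) h fun τ hτ => u_sq_le_four hτ.1)
  exact (hzero a ha).symm.trans (hzero b hb)

lemma v_eq_intervalIntegral {t : ℝ} (ht : 0 ≤ t) : v t = ∫ τ in 0..t, τ * u τ ^ 2 := by
  rw [v, intervalIntegral.integral_of_le ht, integral_Ioc_eq_integral_Ioo]

lemma v_le_v_one_add {a t : ℝ} (ha : 1 < a) (hat : a ≤ t) :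
    v t ≤ v 1 + a ^ 2 / 2 + t ^ 2 / (2 * log a ^ 2) := by
  have hlog : 0 < log a := log_pos ha
  have h_one_a := integral_mul_u_sq_le_of_u_sq_le zero_le_one ha.le fun τ hτ =>
    pow_le_one₀ (u_nonneg (by linarith [hτ.1])) (u_le_one hτ.1)
  have h_a_t := integral_mul_u_sq_le_of_u_sq_le (by linarith) hat fun τ hτ =>
    pow_le_pow_left₀ (u_nonneg (by linarith [hτ.1])) ((u_le_inv_log (ha.trans_le hτ.1)).trans
      (inv_anti₀ hlog (log_le_log (by linarith) hτ.1))) 2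
  rw [v_eq_intervalIntegral (by linarith), v_eq_intervalIntegral zero_le_one,
    ← intervalIntegral.integral_add_adjacent_intervals
      (intervalIntegrable_mul_u_sq le_rfl zero_le_one)
      (intervalIntegrable_mul_u_sq zero_le_one (by linarith)),
    ← intervalIntegral.integral_add_adjacent_intervals
      (intervalIntegrable_mul_u_sq zero_le_one (by linarith : (0 : ℝ) ≤ a))
      (intervalIntegrable_mul_u_sq (by linarith) (by linarith))]
  have h_drop : (t ^ 2 - a ^ 2) / 2 * (log a)⁻¹ ^ 2 ≤ t ^ 2 / (2 * log a ^ 2) := by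
    rw [inv_pow, ← div_eq_mul_inv, div_div]
    gcongr
    nlinarith
  linarith

lemma half_sq_sub_v_one_le {t a : ℝ} (ht : 16 ≤ t) (ha : 1 < a) (hat : a ≤ t)
    (hloga : log a = 4 / 5 * log t) (hlogt : a * log t ≤ 5 / 16 * t) :
    a ^ 2 / 2 - v 1 ≤ t ^ 2 * u t ^ 2 - v t := by
  have hL : 0 < log t := log_pos (by linarith)
  have hv := v_le_v_one_add ha hat
  rw [hloga] at hv
  rw [sq_mul_u_sq (by linarith) (by linarith)]
  have h1 : 225 / 256 * t ^ 2 ≤ (t - 1) ^ 2 := by nlinarith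
  have h2 : a ^ 2 * log t ^ 2 ≤ 25 / 256 * t ^ 2 := by
    rw [← mul_pow]; nlinarith [mul_pos (by linarith : (0:ℝ) < a) hL]
  have h3 : t ^ 2 / (2 * (4 / 5 * log t) ^ 2) = 25 / 32 * (t ^ 2 / log t ^ 2) := by
    field_simp; ring
  have h4 : 225 / 256 * (t ^ 2 / log t ^ 2) ≤ (t - 1) ^ 2 / log t ^ 2 := by
    rw [mul_div_assoc']; gcongr
  have h5 : a ^ 2 ≤ 25 / 256 * (t ^ 2 / log t ^ 2) := by
    rw [mul_div_assoc', le_div_iff₀ (by positivity)]; exact h2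
  linarith

theorem eta_tendsto_atTop :
    Filter.Tendsto (fun t => t ^ 2 * u t ^ 2 - v t) Filter.atTop Filter.atTop := by
  have hlim : Tendsto (fun t : ℝ => (t ^ (4 / 5 : ℝ)) ^ 2 / 2 - v 1) atTop atTop :=
    tendsto_atTop_add_const_right _ _
      (((tendsto_pow_atTop two_ne_zero).comp (tendsto_rpow_atTop (by norm_num))).atTop_div_const
        two_pos)
  refine tendsto_atTop_mono' _ ?_ hlim
  filter_upwards [eventually_ge_atTop 16,
    (isLittleO_log_rpow_atTop (r := 1 / 5) (by norm_num)).bound (c := 5 / 16) (by norm_num)]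
    with t ht hlog
  have ht0 : 0 < t := by linarith
  rw [norm_of_nonneg (log_nonneg (by linarith)), norm_of_nonneg (by positivity)] at hlog
  refine half_sq_sub_v_one_le ht (one_lt_rpow (by linarith) (by norm_num))
    (rpow_le_self_of_one_le (by linarith) (by norm_num)) (log_rpow ht0 _) ?_
  calc t ^ (4 / 5 : ℝ) * log t ≤ t ^ (4 / 5 : ℝ) * (5 / 16 * t ^ (1 / 5 : ℝ)) := by gcongr
    _ = 5 / 16 * t := by rw [mul_left_comm, ← rpow_add ht0]; norm_num
end

section
/- For z ∈ ℂⁿ \ {0} (n ≥ 2) and tangent vector X ∈ ℂⁿ, the quantity g(z,X) = (1 + v(|z|²)/|z|²)|X|² + (u²(|z|²) − v(|z|²)/|z|⁴)|⟨X,z⟩|² satisfies g(z,X) ≥ |X|², with equality only when X = 0; in particular g(z,·) is a positive definite Hermitian form for each z. -/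
open Real MeasureTheory Filter Set

/-- The Grauert metric g(z, X) on ℂⁿ \ {0}.  Here ⟨X, z⟩ = ∑ Xⱼ conj zⱼ equals the
Mathlib inner product ⟪z, X⟫. -/
noncomputable def g {n : ℕ} (z X : EuclideanSpace ℂ (Fin n)) : ℝ :=
  (1 + v (‖z‖ ^ 2) / ‖z‖ ^ 2) * ‖X‖ ^ 2 +
    (u (‖z‖ ^ 2) ^ 2 - v (‖z‖ ^ 2) / ‖z‖ ^ 4) * ‖(inner ℂ z X : ℂ)‖ ^ 2

/-! With t = ‖z‖², g(z,X) − ‖X‖² = u(t)²|⟨X,z⟩|² + (v(t)/t)(‖X‖² − |⟨X,z⟩|²/t), a sum of two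
nonnegative terms by Cauchy–Schwarz since u > 0 and v > 0; if it vanishes, then ⟨X,z⟩ = 0 and
hence ‖X‖ = 0. The analytic input is v(t) > 0, i.e. integrability of τ·u(τ)² at 0, where it is
dominated by 1/(τ log² τ), the derivative of −1/log τ. -/

lemma u_pos {t : ℝ} (ht : 0 < t) : 0 < u t := by
  unfold u
  split_ifs with h1
  · exact one_pos
  rcases lt_or_gt_of_ne h1 with h | h
  · exact div_pos_of_neg_of_neg (by linarith) (mul_neg_of_pos_of_neg ht (log_neg ht h))
  · exact div_pos (by linarith) (mul_pos ht (log_pos h))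

lemma u_le_max_inv_one {t : ℝ} (ht : 0 < t) : u t ≤ max t⁻¹ 1 := by
  unfold u
  split_ifs with h1
  · exact le_max_right _ _
  rcases lt_or_gt_of_ne h1 with h | h
  · refine (div_le_iff_of_neg (mul_neg_of_pos_of_neg ht (log_neg ht h))).2 ?_
    calc max t⁻¹ 1 * (t * log t) ≤ t⁻¹ * (t * log t) :=
          mul_le_mul_of_nonpos_right (le_max_left _ _) (mul_neg_of_pos_of_neg ht (log_neg ht h)).le
      _ = log t := by field_simp
      _ ≤ t - 1 := log_le_sub_one_of_pos ht
  · refine (div_le_iff₀ (mul_pos ht (log_pos h))).2 ?_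
    calc t - 1 = t * (1 - t⁻¹) := by field_simp
      _ ≤ t * log t := mul_le_mul_of_nonneg_left (one_sub_inv_le_log_of_pos ht) ht.le
      _ ≤ max t⁻¹ 1 * (t * log t) :=
          le_mul_of_one_le_left (mul_pos ht (log_pos h)).le (le_max_right _ _)

lemma mul_u_sq_le_of_lt_one {t : ℝ} (h0 : 0 < t) (h1 : t < 1) :
    t * u t ^ 2 ≤ t⁻¹ / log t ^ 2 := by
  have hlog : log t ≠ 0 := log_ne_zero_of_pos_of_ne_one h0 h1.ne
  have h : t * u t ^ 2 = (t - 1) ^ 2 * (t⁻¹ / log t ^ 2) := by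
    rw [u, if_neg h1.ne]
    field_simp
  rw [h]
  exact mul_le_of_le_one_left (by positivity) (by nlinarith)

-- Thanks to `Real.log_zero`, the junk value at 0 is the limit.
lemma continuousAt_inv_log_zero : ContinuousAt (fun x => (log x)⁻¹) 0 := by
  rw [← continuousWithinAt_compl_self, ContinuousWithinAt, log_zero, inv_zero]
  exact tendsto_log_nhdsNE_zero.inv_tendsto_atBot

lemma integrableOn_inv_div_log_sq {c : ℝ} (hc : c < 1) :
    IntegrableOn (fun x => x⁻¹ / log x ^ 2) (Ioc 0 c) := by
  refine intervalIntegral.integrableOn_deriv_of_nonneg (g := fun x => -(log x)⁻¹) ?_ ?_ ?_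
  · intro x hx
    rcases hx.1.eq_or_lt with rfl | hx0
    · exact continuousAt_inv_log_zero.neg.continuousWithinAt
    · have hlog : log x ≠ 0 := log_ne_zero_of_pos_of_ne_one hx0 (by linarith [hx.2])
      exact ((continuousAt_log hx0.ne').inv₀ hlog).neg.continuousWithinAt
  · intro x hx
    have h := (hasDerivAt_inv_log hx.1.ne' (by linarith [hx.2]) (by linarith [hx.1])).neg
    rwa [neg_div, neg_neg] at h
  · intro x hx
    have := hx.1
    positivity

lemma integrableOn_mul_u_sq (T : ℝ) : IntegrableOn (fun t => t * u t ^ 2) (Ioc 0 T) := by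
  have hmeas : Measurable (fun t => t * u t ^ 2) := by
    have := measurable_u
    fun_prop
  have hsmall : IntegrableOn (fun t => t * u t ^ 2) (Ioc 0 (1 / 2)) := by
    refine (integrableOn_inv_div_log_sq (by norm_num)).mono' hmeas.aestronglyMeasurable ?_
    filter_upwards [ae_restrict_mem measurableSet_Ioc] with t ht
    have := ht.1
    rw [norm_of_nonneg (by positivity)]
    exact mul_u_sq_le_of_lt_one ht.1 (by linarith [ht.2])
  have hlarge : IntegrableOn (fun t => t * u t ^ 2) (Icc (1 / 2) T) := by
    refine IntegrableOn.of_bound measure_Icc_lt_top hmeas.aestronglyMeasurable (4 * T) ?_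
    filter_upwards [ae_restrict_mem measurableSet_Icc] with t ht
    have ht0 : 0 < t := by linarith [ht.1]
    have hu : u t ≤ 2 := (u_le_max_inv_one ht0).trans
      (max_le ((inv_le_comm₀ ht0 (by norm_num)).2 (by linarith [ht.1])) (by norm_num))
    have hu0 := u_pos ht0
    rw [norm_of_nonneg (by positivity), mul_comm 4 T]
    exact mul_le_mul ht.2 (by nlinarith) (by positivity) (by linarith [ht.2])
  refine (hsmall.union hlarge).mono_set fun t ht => ?_
  rcases le_or_gt t (1 / 2) with h | h
  · exact Or.inl ⟨ht.1, h⟩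
  · exact Or.inr ⟨h.le, ht.2⟩

lemma v_pos {T : ℝ} (hT : 0 < T) : 0 < v T := by
  rw [v, ← integral_Ioc_eq_integral_Ioo, ← intervalIntegral.integral_of_le hT.le]
  refine intervalIntegral.intervalIntegral_pos_of_pos_on ?_ (fun t ht => ?_) hT
  · exact (intervalIntegrable_iff_integrableOn_Ioc_of_le hT.le).2 (integrableOn_mul_u_sq T)
  · have := u_pos ht.1
    have := ht.1
    positivity

lemma g_eq_norm_sq_add {n : ℕ} (z X : EuclideanSpace ℂ (Fin n)) :
    g z X = ‖X‖ ^ 2 + (u (‖z‖ ^ 2) ^ 2 * ‖(inner ℂ z X : ℂ)‖ ^ 2 +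
      v (‖z‖ ^ 2) / ‖z‖ ^ 2 * (‖X‖ ^ 2 - ‖(inner ℂ z X : ℂ)‖ ^ 2 / ‖z‖ ^ 2)) := by
  rw [g]
  ring

lemma norm_inner_sq_div_le {n : ℕ} {z : EuclideanSpace ℂ (Fin n)} (hz : z ≠ 0)
    (X : EuclideanSpace ℂ (Fin n)) : ‖(inner ℂ z X : ℂ)‖ ^ 2 / ‖z‖ ^ 2 ≤ ‖X‖ ^ 2 := by
  rw [div_le_iff₀ (by positivity), ← mul_pow, mul_comm ‖X‖]
  exact pow_le_pow_left₀ (norm_nonneg _) (norm_inner_le_norm z X) 2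

theorem g_pos_def_general {n : ℕ} (z X : EuclideanSpace ℂ (Fin n)) (hz : z ≠ 0) :
    ‖X‖ ^ 2 ≤ g z X ∧ (g z X = ‖X‖ ^ 2 → X = 0) := by
  set t := ‖z‖ ^ 2
  set b := ‖(inner ℂ z X : ℂ)‖ ^ 2
  have ht : 0 < t := by positivity
  have hu : 0 < u t ^ 2 := pow_pos (u_pos ht) 2
  have hv : 0 < v t / t := div_pos (v_pos ht) ht
  have hb : 0 ≤ b := by positivity
  have hCS : 0 ≤ ‖X‖ ^ 2 - b / t := sub_nonneg.2 (norm_inner_sq_div_le hz X)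
  have hub := mul_nonneg hu.le hb
  have hvCS := mul_nonneg hv.le hCS
  rw [g_eq_norm_sq_add]
  refine ⟨le_add_of_nonneg_right (add_nonneg hub hvCS), fun h => ?_⟩
  obtain ⟨hub0, hvCS0⟩ := (add_eq_zero_iff_of_nonneg hub hvCS).1 (by linarith)
  have hb0 : b = 0 := (mul_eq_zero.1 hub0).resolve_left hu.ne'
  have hCS0 : ‖X‖ ^ 2 - b / t = 0 := (mul_eq_zero.1 hvCS0).resolve_left hv.ne'
  rw [hb0, zero_div, sub_zero, sq_eq_zero_iff, norm_eq_zero] at hCS0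
  exact hCS0

theorem g_pos_def {n : ℕ} (hn : 2 ≤ n) (z X : EuclideanSpace ℂ (Fin n)) (hz : z ≠ 0) :
    ‖X‖ ^ 2 ≤ g z X ∧ (g z X = ‖X‖ ^ 2 → X = 0) :=
  g_pos_def_general z X hz
end

section
/- Define f(t) = −2(3t²u²(t) − 2v(t) + t)/(t + v(t))² for t ∈ (0,∞), where u(t) = (t-1)/(t·log t) and v(t) = ∫₀ᵗ τu²(τ) dτ. Then f(1) < 0. -/
/-!
Since `u 1 = 1`, `f 1 = -2 (4 - 2 v(1)) / (1 + v(1))²`, so it suffices that `0 ≤ v(1) < 2`.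
Split the integral `v(1) = ∫₀¹ (1 - τ)² / (τ log² τ) dτ` at `c = e⁻²`. On `(0, c]` bound
`(1 - τ)² ≤ 1`; the majorant `(τ log² τ)⁻¹` has primitive `(-log τ)⁻¹`, so that piece is at most
`1 / 2`. On `(c, 1)` the inequality `-log τ ≥ 2 (1 - τ) / (1 + τ)` bounds the integrand by
`(1 + τ)² / (4 τ)`, whose integral is at most `9 / 8`. Hence `v(1) ≤ 13 / 8`. (With `a = -log c`
the two pieces are bounded by `1 / a` and `a / 4 + 5 / 8`, and `a = 2` minimises the sum.)
-/

open Real MeasureTheory Filter Set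

/-- f(t) = −2(3t²u²(t) − 2v(t) + t)/(t + v(t))². -/
noncomputable def f (t : ℝ) : ℝ :=
  -2 * (3 * t ^ 2 * u t ^ 2 - 2 * v t + t) / (t + v t) ^ 2

lemma two_mul_one_sub_div_one_add_le_neg_log {x : ℝ} (hx0 : 0 < x) (hx1 : x ≤ 1) :
    2 * (1 - x) / (1 + x) ≤ -log x := by
  have h := le_log_one_add_of_nonneg (x := x⁻¹ - 1)
    (sub_nonneg.2 ((one_le_inv₀ hx0).2 hx1))
  rw [add_sub_cancel, log_inv, show x⁻¹ - 1 + 2 = (1 + x) / x by field_simp; ring] at h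
  convert h using 1
  field_simp

lemma mul_u_sq_eq {τ : ℝ} (h0 : τ ≠ 0) (h1 : τ ≠ 1) :
    τ * u τ ^ 2 = (1 - τ) ^ 2 / (τ * log τ ^ 2) := by
  rw [u, if_neg h1, div_pow, mul_pow, ← sq_abs (τ - 1), abs_sub_comm, sq_abs]
  field_simp

lemma mul_u_sq_le_inv_mul_log_sq {τ : ℝ} (h0 : 0 < τ) (h1 : τ < 1) :
    τ * u τ ^ 2 ≤ (τ * log τ ^ 2)⁻¹ := by
  rw [mul_u_sq_eq h0.ne' h1.ne, div_eq_mul_inv]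
  have := log_neg h0 h1
  exact mul_le_of_le_one_left (by positivity) (by nlinarith)

lemma mul_u_sq_le_one_add_sq_div_four_mul {τ : ℝ} (h0 : 0 < τ) (h1 : τ < 1) :
    τ * u τ ^ 2 ≤ (1 + τ) ^ 2 / (4 * τ) := by
  have hlog := two_mul_one_sub_div_one_add_le_neg_log h0 h1.le
  rw [div_le_iff₀ (by linarith)] at hlog
  have hlog0 : log τ < 0 := log_neg h0 h1
  rw [mul_u_sq_eq h0.ne' h1.ne,
    div_le_div_iff₀ (mul_pos h0 (sq_pos_of_neg hlog0)) (by positivity)]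
  have := mul_self_le_mul_self (by linarith) hlog
  nlinarith

lemma v_nonneg (t : ℝ) : 0 ≤ v t :=
  setIntegral_nonneg measurableSet_Ioo fun τ hτ => by have := hτ.1; positivity

lemma hasDerivAt_inv_neg_log {x : ℝ} (hx : log x ≠ 0) :
    HasDerivAt (fun τ => (-log τ)⁻¹) (x * log x ^ 2)⁻¹ x := by
  have hx0 : x ≠ 0 := by rintro rfl; simp at hx
  refine ((hasDerivAt_log hx0).neg.inv (neg_ne_zero.2 hx)).congr_deriv ?_
  simp only [Pi.neg_apply, neg_neg]
  field_simp

lemma continuousOn_inv_neg_log {c : ℝ} (hc : c < 1) :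
    ContinuousOn (fun τ => (-log τ)⁻¹) (Icc 0 c) := by
  intro x hx
  rcases hx.1.eq_or_lt with rfl | hx0
  -- `log 0 = 0`, so the value at `0` is `0⁻¹ = 0`, which is also the limit from the right.
  · refine (continuousWithinAt_Ioi_iff_Ici.1 ?_).mono fun y hy => hy.1
    rw [ContinuousWithinAt, log_zero, neg_zero, inv_zero]
    exact (tendsto_neg_atBot_atTop.comp tendsto_log_nhdsGT_zero).inv_tendsto_atTop
  · exact ((continuousAt_log hx0.ne').neg.inv₀
      (neg_ne_zero.2 (log_neg hx0 (hx.2.trans_lt hc)).ne)).continuousWithinAt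

lemma integrableOn_inv_mul_log_sq {c : ℝ} (hc : c < 1) :
    IntegrableOn (fun τ => (τ * log τ ^ 2)⁻¹) (Ioc 0 c) :=
  intervalIntegral.integrableOn_deriv_of_nonneg (continuousOn_inv_neg_log hc)
    (fun x hx => hasDerivAt_inv_neg_log (log_neg hx.1 (hx.2.trans hc)).ne)
    (fun x hx => by have := hx.1; positivity)

lemma integral_inv_mul_log_sq {c : ℝ} (hc0 : 0 ≤ c) (hc1 : c < 1) :
    ∫ τ in Ioc 0 c, (τ * log τ ^ 2)⁻¹ = (-log c)⁻¹ := by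
  rw [← intervalIntegral.integral_of_le hc0,
    intervalIntegral.integral_eq_sub_of_hasDerivAt_of_le hc0 (continuousOn_inv_neg_log hc1)
      (fun x hx => hasDerivAt_inv_neg_log (log_neg hx.1 (hx.2.trans hc1)).ne)
      ((intervalIntegrable_iff_integrableOn_Ioc_of_le hc0).2 (integrableOn_inv_mul_log_sq hc1))]
  simp

lemma integral_one_add_sq_div_four_mul {a b : ℝ} (ha : 0 < a) (hb : 0 < b) :
    ∫ τ in a..b, (1 + τ) ^ 2 / (4 * τ) =
      (log b - log a) / 4 + (b - a) / 2 + (b ^ 2 - a ^ 2) / 8 := by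
  have hpos : ∀ x ∈ uIcc a b, 0 < x := fun x hx => (lt_min ha hb).trans_le hx.1
  rw [intervalIntegral.integral_eq_sub_of_hasDerivAt
    (f := fun τ => log τ / 4 + τ / 2 + τ ^ 2 / 8) (fun x hx => ?_)
    (ContinuousOn.intervalIntegrable (by
      refine ContinuousOn.div (by fun_prop) (by fun_prop) fun x hx => ?_
      have := hpos x hx; positivity))]
  · ring
  · have hx0 := (hpos x hx).ne'
    refine (((hasDerivAt_log hx0).div_const 4).add ((hasDerivAt_id x).div_const 2)).add
      ((hasDerivAt_pow 2 x).div_const 8) |>.congr_deriv ?_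
    field_simp
    ring

lemma integrableOn_of_nonneg_of_le {α : Type*} [MeasurableSpace α] {μ : Measure α} {s : Set α}
    {g h : α → ℝ} (hh : IntegrableOn h s μ) (hs : MeasurableSet s)
    (hg : AEStronglyMeasurable g (μ.restrict s)) (h0 : ∀ x ∈ s, 0 ≤ g x)
    (hle : ∀ x ∈ s, g x ≤ h x) : IntegrableOn g s μ :=
  hh.mono' hg <| (ae_restrict_iff' hs).2 <| ae_of_all _ fun x hx => by
    rw [Real.norm_of_nonneg (h0 x hx)]
    exact hle x hx

lemma v_one_le : v 1 ≤ 13 / 8 := by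
  set c := exp (-2)
  have hc0 : 0 < c := exp_pos _
  have hc1 : c < 1 := exp_lt_one_iff.2 (by norm_num)
  set g : ℝ → ℝ := fun τ => τ * u τ ^ 2
  have hg_meas : AEStronglyMeasurable g :=
    (measurable_id.mul (measurable_u.pow_const 2)).aestronglyMeasurable
  have hg_nonneg : ∀ τ ∈ Ioo 0 1, 0 ≤ g τ := fun τ hτ => by have := hτ.1; positivity
  have hI₁ := integrableOn_inv_mul_log_sq hc1
  have hI₂ : IntegrableOn (fun τ => (1 + τ) ^ 2 / (4 * τ)) (Ioo c 1) :=
    (ContinuousOn.integrableOn_Icc (ContinuousOn.div (by fun_prop) (by fun_prop)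
      fun x hx => by have := hc0.trans_le hx.1; positivity)).mono_set Ioo_subset_Icc_self
  have hle₁ : ∀ τ ∈ Ioc 0 c, g τ ≤ (τ * log τ ^ 2)⁻¹ := fun τ hτ =>
    mul_u_sq_le_inv_mul_log_sq hτ.1 (hτ.2.trans_lt hc1)
  have hle₂ : ∀ τ ∈ Ioo c 1, g τ ≤ (1 + τ) ^ 2 / (4 * τ) := fun τ hτ =>
    mul_u_sq_le_one_add_sq_div_four_mul (hc0.trans hτ.1) hτ.2
  have hg₁ : IntegrableOn g (Ioc 0 c) :=
    integrableOn_of_nonneg_of_le hI₁ measurableSet_Ioc hg_meas.restrict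
      (fun τ hτ => hg_nonneg τ ⟨hτ.1, hτ.2.trans_lt hc1⟩) hle₁
  have hg₂ : IntegrableOn g (Ioo c 1) :=
    integrableOn_of_nonneg_of_le hI₂ measurableSet_Ioo hg_meas.restrict
      (fun τ hτ => hg_nonneg τ ⟨hc0.trans hτ.1, hτ.2⟩) hle₂
  calc v 1 = (∫ τ in Ioc 0 c, g τ) + ∫ τ in Ioo c 1, g τ := by
        rw [v, ← Ioc_union_Ioo_eq_Ioo hc0.le hc1]
        exact setIntegral_union (disjoint_left.2 fun x h₁ h₂ => (h₁.2.trans_lt h₂.1).false)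
          measurableSet_Ioo hg₁ hg₂
    _ ≤ (∫ τ in Ioc 0 c, (τ * log τ ^ 2)⁻¹) + ∫ τ in Ioo c 1, (1 + τ) ^ 2 / (4 * τ) :=
        add_le_add (setIntegral_mono_on hg₁ hI₁ measurableSet_Ioc hle₁)
          (setIntegral_mono_on hg₂ hI₂ measurableSet_Ioo hle₂)
    _ = 1 / 2 + (1 / 2 + (1 - c) / 2 + (1 - c ^ 2) / 8) := by
        rw [integral_inv_mul_log_sq hc0.le hc1, ← integral_Ioc_eq_integral_Ioo,
          ← intervalIntegral.integral_of_le hc1.le, integral_one_add_sq_div_four_mul hc0 one_pos]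
        norm_num [c]
    _ ≤ 13 / 8 := by nlinarith

theorem f_one_neg : f 1 < 0 := by
  have hu : u 1 = 1 := if_pos rfl
  have hv₀ := v_nonneg 1
  have hv := v_one_le
  rw [f, hu]
  apply div_neg_of_neg_of_pos <;> nlinarith
end

section
/- The function log u(|z|²) with u(t) = (t−1)/(t·log t) is subharmonic on ℂ \ {0}; equivalently, for all t ∈ (0,∞), u(t)u'(t) + t(u(t)u''(t) − u'(t)²) ≥ 0. -/
open Real MeasureTheory Filter Set

/-!
For `t > 0` we have `u t = ∫₋₁⁰ t ^ s ds`, so `u = M ∘ log` with `M` the moment generating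
function of Lebesgue measure on `(-1, 0]`. By the chain rule the expression equals
`(M M'' - M'^2)(log t) / t`, and `M M'' - M'^2 ≥ 0` is the log-convexity of a moment generating
function: the second derivative of the cumulant generating function `log M` is a variance.
-/

open ProbabilityTheory Topology

lemma ProbabilityTheory.deriv_mgf_sq_le_mgf_mul_deriv_deriv {Ω : Type*}
    {m : MeasurableSpace Ω} {X : Ω → ℝ} {μ : Measure Ω} {v : ℝ}
    (hv : v ∈ interior (integrableExpSet X μ)) :
    deriv (mgf X μ) v ^ 2 ≤ mgf X μ v * deriv (deriv (mgf X μ)) v := by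
  rcases eq_or_ne μ 0 with rfl | hμ
  · simp
  have hpos := mgf_pos' hμ (interior_subset (s := integrableExpSet X μ) hv)
  have hcgf_convex : 0 ≤ iteratedDeriv 2 (cgf X μ) v := by
    rw [iteratedDeriv_two_cgf_eq_integral hv]
    exact div_nonneg (integral_nonneg fun ω => by positivity) hpos.le
  rw [iteratedDeriv_two_cgf hv, deriv_cgf hv, div_pow, sub_nonneg,
    div_le_div_iff₀ (by positivity) hpos] at hcgf_convex
  rw [deriv_mgf hv, ← iteratedDeriv_one (f := mgf X μ), ← iteratedDeriv_succ,
    iteratedDeriv_mgf hv]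
  nlinarith

lemma integrableExpSet_id_volume_restrict_Ioc (a b : ℝ) :
    integrableExpSet id (volume.restrict (Ioc a b)) = univ :=
  eq_univ_of_forall fun _ => (by fun_prop : Continuous _).integrableOn_Ioc

lemma mgf_id_volume_restrict_Ioc {a b x : ℝ} (hab : a ≤ b) (hx : x ≠ 0) :
    mgf id (volume.restrict (Ioc a b)) x = (exp (x * b) - exp (x * a)) / x := by
  rw [mgf, ← intervalIntegral.integral_of_le hab]
  simp only [id, intervalIntegral.integral_comp_mul_left (fun y => exp y) hx, integral_exp,
    smul_eq_mul]
  field_simp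

lemma u_eq_mgf_log {t : ℝ} (ht : 0 < t) :
    u t = mgf id (volume.restrict (Ioc (-1) 0)) (log t) := by
  rcases eq_or_ne t 1 with rfl | hne
  · simp [u, mgf]
  rw [u, if_neg hne, mgf_id_volume_restrict_Ioc (by norm_num)
    (log_ne_zero_of_pos_of_ne_one ht hne), mul_zero, exp_zero, mul_neg_one, exp_neg, exp_log ht]
  field_simp

section CompLog

variable {f g : ℝ → ℝ} {t : ℝ}

lemma deriv_of_eqOn_comp_log (hg : EqOn g (f ∘ log) (Ioi 0)) (hf : Differentiable ℝ f)
    (ht : 0 < t) : deriv g t = deriv f (log t) / t := by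
  have hloc : g =ᶠ[𝓝 t] f ∘ log := eventually_of_mem (Ioi_mem_nhds ht) hg
  rw [hloc.deriv_eq, ((hf _).hasDerivAt.comp t (hasDerivAt_log ht.ne')).deriv, div_eq_mul_inv]

lemma deriv_deriv_of_eqOn_comp_log (hg : EqOn g (f ∘ log) (Ioi 0)) (hf : Differentiable ℝ f)
    (hf' : Differentiable ℝ (deriv f)) (ht : 0 < t) :
    deriv (deriv g) t = (deriv (deriv f) (log t) - deriv f (log t)) / t ^ 2 := by
  have hloc : deriv g =ᶠ[𝓝 t] deriv f ∘ log / id :=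
    eventually_of_mem (Ioi_mem_nhds ht) fun x hx => deriv_of_eqOn_comp_log hg hf hx
  have hd := ((hf' _).hasDerivAt.comp t (hasDerivAt_log ht.ne')).div (hasDerivAt_id t) ht.ne'
  rw [hloc.deriv_eq, hd.deriv, Function.comp_apply, id]
  field_simp

lemma mul_deriv_add_mul_sub_sq_of_eqOn_comp_log (hg : EqOn g (f ∘ log) (Ioi 0))
    (hf : Differentiable ℝ f) (hf' : Differentiable ℝ (deriv f)) (ht : 0 < t) :
    g t * deriv g t + t * (g t * deriv (deriv g) t - deriv g t ^ 2) =
      (f (log t) * deriv (deriv f) (log t) - deriv f (log t) ^ 2) / t := by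
  rw [hg ht, Function.comp_apply, deriv_of_eqOn_comp_log hg hf ht,
    deriv_deriv_of_eqOn_comp_log hg hf hf' ht]
  field_simp
  ring

end CompLog

theorem log_u_subharmonic :
    ∀ t : ℝ, 0 < t →
      0 ≤ u t * deriv u t + t * (u t * deriv (deriv u) t - (deriv u t) ^ 2) := by
  intro t ht
  set μ := volume.restrict (Ioc (-1 : ℝ) 0)
  have hmem (x : ℝ) : x ∈ interior (integrableExpSet id μ) := by
    simp [μ, integrableExpSet_id_volume_restrict_Ioc]
  have hf : Differentiable ℝ (mgf id μ) := fun x => differentiableAt_mgf (hmem x)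
  have hf' : Differentiable ℝ (deriv (mgf id μ)) := fun x => by
    simpa using differentiableAt_iteratedDeriv_mgf (hmem x) 1
  rw [mul_deriv_add_mul_sub_sq_of_eqOn_comp_log (fun _ => u_eq_mgf_log) hf hf' ht]
  exact div_nonneg (sub_nonneg.2 (deriv_mgf_sq_le_mgf_mul_deriv_deriv (hmem _))) ht.le
end
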